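/- arXiv:1803.00502 — 3 statements merged into one kernel-verified Lean document; each statement's English description precedes it below -/
import Mathlib

section
/- Let X = [X₀, X₁] and Y = [Y₀, Y₁] be n×n orthogonal matrices where X₀, Y₀ ∈ ℝ^{n×k}. Then ‖X₀X₀ᵀ − Y₀Y₀ᵀ‖₂ = ‖X₀ᵀY₁‖₂ in the spectral (operator 2-) norm. -/
/-!
Write `P = X₀X₀ᵀ` and `Q = Y₀Y₀ᵀ`. For every `x`, `(P - Q)x = P(1 - Q)x - (1 - P)Qx` is a sum of two
orthogonal vectors, controlled by the orthogonal pieces `(1 - Q)x` and `Qx` of `x`, so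
`‖P - Q‖ = max ‖P(1 - Q)‖ ‖(1 - P)Q‖ = max ‖X₀ᵀY₁‖ ‖X₁ᵀY₀‖`.
With the square matrix `A = X₀ᵀY₀` we have `AAᵀ + BBᵀ = 1` for `B = X₀ᵀY₁` and `AᵀA + CᵀC = 1` for
`C = X₁ᵀY₀`, so `‖B‖²` and `‖C‖²` are both `1 - σ_min(A)²`; in particular the maximum is `‖X₀ᵀY₁‖`.
-/

open Matrix

/-- Spectral (operator 2-) norm of a real matrix. -/
noncomputable def specNorm {m n : ℕ} (A : Matrix (Fin m) (Fin n) ℝ) : ℝ :=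
  ‖LinearMap.toContinuousLinearMap (Matrix.toEuclideanLin A)‖

open scoped InnerProductSpace

theorem IsStarProjection.norm_mul_one_sub_le_norm_sub {R : Type*} [NormedRing R] [StarRing R]
    [CStarRing R] {p : R} (hp : IsStarProjection p) (q : R) : ‖p * (1 - q)‖ ≤ ‖p - q‖ :=
  calc ‖p * (1 - q)‖ = ‖p * (p - q)‖ := by rw [mul_sub, mul_sub, mul_one, hp.isIdempotentElem.eq]
    _ ≤ ‖p‖ * ‖p - q‖ := norm_mul_le _ _
    _ ≤ ‖p - q‖ := mul_le_of_le_one_left (norm_nonneg _) (IsStarProjection.norm_le p hp)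

namespace ContinuousLinearMap

variable {𝕜 E : Type*} [RCLike 𝕜] [NormedAddCommGroup E] [InnerProductSpace 𝕜 E] [CompleteSpace E]

theorem inner_apply_one_sub_apply_eq_zero {P : E →L[𝕜] E} (hP : IsStarProjection P) (x y : E) :
    ⟪P x, (1 - P) y⟫_𝕜 = 0 := by
  rw [← adjoint_inner_right, hP.isSelfAdjoint.adjoint_eq, ← mul_apply_eq_comp, hP.mul_one_sub_self,
    _root_.zero_apply, inner_zero_right]

theorem norm_apply_sq_add_norm_one_sub_apply_sq {P : E →L[𝕜] E} (hP : IsStarProjection P)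
    (x : E) : ‖P x‖ ^ 2 + ‖(1 - P) x‖ ^ 2 = ‖x‖ ^ 2 := by
  have h := norm_add_sq_eq_norm_sq_add_norm_sq_of_inner_eq_zero _ _
    (inner_apply_one_sub_apply_eq_zero hP x x)
  rw [_root_.sub_apply, one_apply_eq_self, add_sub_cancel] at h
  simpa only [sq, _root_.sub_apply, one_apply_eq_self] using h.symm

theorem norm_sub_le_max_of_isStarProjection {P Q : E →L[𝕜] E} (hP : IsStarProjection P)
    (hQ : IsStarProjection Q) : ‖P - Q‖ ≤ max ‖P * (1 - Q)‖ ‖(1 - P) * Q‖ := by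
  set M := max ‖P * (1 - Q)‖ ‖(1 - P) * Q‖
  have hM : 0 ≤ M := le_max_of_le_left (norm_nonneg _)
  refine opNorm_le_bound _ hM fun x => ?_
  set u := P ((1 - Q) x)
  set v := (1 - P) (Q x)
  have hsplit : (P - Q) x = u - v := by
    simp only [u, v, _root_.sub_apply, one_apply_eq_self, map_sub]; abel
  have hu : ‖u‖ ≤ M * ‖(1 - Q) x‖ := by
    have : u = (P * (1 - Q)) ((1 - Q) x) := by
      rw [mul_apply_eq_comp, ← mul_apply_eq_comp (1 - Q), hQ.one_sub.isIdempotentElem.eq]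
    rw [this]
    exact (le_opNorm _ _).trans (mul_le_mul_of_nonneg_right (le_max_left _ _) (norm_nonneg _))
  have hv : ‖v‖ ≤ M * ‖Q x‖ := by
    have : v = ((1 - P) * Q) (Q x) := by
      rw [mul_apply_eq_comp, ← mul_apply_eq_comp Q, hQ.isIdempotentElem.eq]
    rw [this]
    exact (le_opNorm _ _).trans (mul_le_mul_of_nonneg_right (le_max_right _ _) (norm_nonneg _))
  have huv : ‖u - v‖ ^ 2 = ‖u‖ ^ 2 + ‖v‖ ^ 2 := by
    rw [@norm_sub_sq 𝕜, inner_apply_one_sub_apply_eq_zero hP, map_zero, mul_zero, sub_zero]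
  have hx := norm_apply_sq_add_norm_one_sub_apply_sq hQ x
  refine (pow_le_pow_iff_left₀ (norm_nonneg _) (by positivity) two_ne_zero).1 ?_
  calc ‖(P - Q) x‖ ^ 2 = ‖u‖ ^ 2 + ‖v‖ ^ 2 := by rw [hsplit, huv]
    _ ≤ (M * ‖(1 - Q) x‖) ^ 2 + (M * ‖Q x‖) ^ 2 := by gcongr
    _ = (M * ‖x‖) ^ 2 := by rw [mul_pow, mul_pow, mul_pow, ← hx]; ring

theorem norm_sub_eq_max_of_isStarProjection {P Q : E →L[𝕜] E} (hP : IsStarProjection P)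
    (hQ : IsStarProjection Q) : ‖P - Q‖ = max ‖P * (1 - Q)‖ ‖(1 - P) * Q‖ := by
  refine le_antisymm (norm_sub_le_max_of_isStarProjection hP hQ) (max_le ?_ ?_)
  · exact hP.norm_mul_one_sub_le_norm_sub Q
  · simpa [norm_sub_rev] using hP.one_sub.norm_mul_one_sub_le_norm_sub (1 - Q)

end ContinuousLinearMap

namespace LinearMap

variable {𝕜 E : Type*} [RCLike 𝕜] [NormedAddCommGroup E] [InnerProductSpace 𝕜 E]
  [FiniteDimensional 𝕜 E]

theorem le_norm_apply_sq_of_le_norm_adjoint_apply_sq (T : E →ₗ[𝕜] E) {c : ℝ}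
    (h : ∀ y, c * ‖y‖ ^ 2 ≤ ‖T.adjoint y‖ ^ 2) (x : E) : c * ‖x‖ ^ 2 ≤ ‖T x‖ ^ 2 := by
  rcases le_or_gt c 0 with hc | hc
  · exact (mul_nonpos_of_nonpos_of_nonneg hc (sq_nonneg _)).trans (sq_nonneg _)
  have hinj : Function.Injective T.adjoint := by
    refine (injective_iff_map_eq_zero _).2 fun y hy => ?_
    have := h y
    rw [hy, norm_zero, zero_pow two_ne_zero] at this
    simpa [hc.ne'] using le_antisymm ((mul_nonpos_iff_pos_imp_nonpos.1 this).1 hc) (sq_nonneg ‖y‖)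
  obtain ⟨y, rfl⟩ := (injective_iff_surjective.1 hinj) x
  have hx : ‖T.adjoint y‖ ^ 2 ≤ ‖T (T.adjoint y)‖ * ‖y‖ := by
    rw [← inner_self_eq_norm_sq (𝕜 := 𝕜), adjoint_inner_right]
    exact re_inner_le_norm (𝕜 := 𝕜) _ _
  rcases eq_or_lt_of_le (sq_nonneg ‖T.adjoint y‖) with hx0 | hx0
  · rw [← hx0, mul_zero]; exact sq_nonneg _
  refine le_of_mul_le_mul_right ?_ hx0
  calc c * ‖T.adjoint y‖ ^ 2 * ‖T.adjoint y‖ ^ 2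
      ≤ c * (‖T (T.adjoint y)‖ * ‖y‖) ^ 2 := by rw [mul_assoc, ← sq]; gcongr
    _ = ‖T (T.adjoint y)‖ ^ 2 * (c * ‖y‖ ^ 2) := by ring
    _ ≤ ‖T (T.adjoint y)‖ ^ 2 * ‖T.adjoint y‖ ^ 2 := by gcongr; exact h y

end LinearMap

namespace Matrix

theorem conjTranspose_mul_self_eq_one_of_fromCols {R m n₁ n₂ : Type*} [Semiring R] [StarRing R]
    [Fintype m] [DecidableEq n₁] [DecidableEq n₂] {A : Matrix m n₁ R} {B : Matrix m n₂ R}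
    (h : (fromCols A B)ᴴ * fromCols A B = 1) : Aᴴ * A = 1 ∧ Bᴴ * B = 1 := by
  rw [conjTranspose_fromCols_eq_fromRows_conjTranspose, fromRows_mul_fromCols, ← fromBlocks_one,
    fromBlocks_inj] at h
  exact ⟨h.1, h.2.2.2⟩

open scoped Matrix.Norms.L2Operator

variable {𝕜 l m n : Type*} [RCLike 𝕜] [Fintype l] [Fintype m] [Fintype n] [DecidableEq n]

theorem l2_opNorm_le_of_forall {A : Matrix m n 𝕜} {c : ℝ} (hc : 0 ≤ c)
    (h : ∀ x, ‖toEuclideanLin A x‖ ≤ c * ‖x‖) : ‖A‖ ≤ c :=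
  ContinuousLinearMap.opNorm_le_bound _ hc h

theorem norm_toEuclideanLin_sq [DecidableEq m] (A : Matrix m n 𝕜) (x : EuclideanSpace 𝕜 n) :
    ‖toEuclideanLin A x‖ ^ 2 = RCLike.re ⟪x, toEuclideanLin (Aᴴ * A) x⟫_𝕜 := by
  rw [toLpLin_mul_same, LinearMap.comp_apply, toEuclideanLin_conjTranspose_eq_adjoint,
    LinearMap.adjoint_inner_right, inner_self_eq_norm_sq]

theorem norm_toEuclideanLin_sq_add_sq [DecidableEq l] [DecidableEq m] {A : Matrix m n 𝕜}
    {B : Matrix l n 𝕜} (h : Aᴴ * A + Bᴴ * B = 1) (x : EuclideanSpace 𝕜 n) :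
    ‖toEuclideanLin A x‖ ^ 2 + ‖toEuclideanLin B x‖ ^ 2 = ‖x‖ ^ 2 := by
  rw [norm_toEuclideanLin_sq, norm_toEuclideanLin_sq, ← map_add, ← inner_add_right,
    ← LinearMap.add_apply, ← map_add, h, toLpLin_one, LinearMap.id_apply,
    inner_self_eq_norm_sq]

theorem l2_opNorm_sub_eq_max_of_isStarProjection {P Q : Matrix n n 𝕜}
    (hP : IsStarProjection P) (hQ : IsStarProjection Q) :
    ‖P - Q‖ = max ‖P * (1 - Q)‖ ‖(1 - P) * Q‖ := by
  simpa only [cstar_norm_def, map_sub, map_mul, map_one] using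
    ContinuousLinearMap.norm_sub_eq_max_of_isStarProjection (hP.map toEuclideanCLM)
      (hQ.map toEuclideanCLM)

theorem l2_opNorm_le_of_isometric_completions [DecidableEq l] [DecidableEq m] (A : Matrix n n 𝕜)
    {B : Matrix n m 𝕜} {C : Matrix l n 𝕜} (hB : A * Aᴴ + B * Bᴴ = 1)
    (hC : Aᴴ * A + Cᴴ * C = 1) : ‖C‖ ≤ ‖B‖ := by
  -- `‖Aᴴy‖² = ‖y‖² - ‖Bᴴy‖²` and `‖Cx‖² = ‖x‖² - ‖Ax‖²`; as `A` is square, a lower bound for `Aᴴ`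
  -- is one for `A`.
  have hAC := norm_toEuclideanLin_sq_add_sq hC
  have hAB := norm_toEuclideanLin_sq_add_sq (A := Aᴴ) (B := Bᴴ) (by simpa using hB)
  have hA : ∀ x, (1 - ‖B‖ ^ 2) * ‖x‖ ^ 2 ≤ ‖toEuclideanLin A x‖ ^ 2 := by
    refine (toEuclideanLin A).le_norm_apply_sq_of_le_norm_adjoint_apply_sq fun y => ?_
    have hBy : ‖toEuclideanLin Bᴴ y‖ ≤ ‖B‖ * ‖y‖ := by
      rw [← l2_opNorm_conjTranspose B]
      exact l2_opNorm_mulVec Bᴴ y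
    rw [← toEuclideanLin_conjTranspose_eq_adjoint]
    nlinarith [hAB y, norm_nonneg (toEuclideanLin Bᴴ y)]
  refine l2_opNorm_le_of_forall (norm_nonneg B) fun x => ?_
  refine (pow_le_pow_iff_left₀ (norm_nonneg _) (by positivity) two_ne_zero).1 ?_
  nlinarith [hAC x, hA x]

theorem l2_opNorm_isometry_mul [DecidableEq l] {U : Matrix m n 𝕜} (hU : Uᴴ * U = 1)
    (M : Matrix n l 𝕜) : ‖U * M‖ = ‖M‖ := by
  have h : ‖U * M‖ * ‖U * M‖ = ‖M‖ * ‖M‖ := by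
    rw [← l2_opNorm_conjTranspose_mul_self, ← l2_opNorm_conjTranspose_mul_self,
      conjTranspose_mul, Matrix.mul_assoc, ← Matrix.mul_assoc Uᴴ, hU, Matrix.one_mul]
  exact (mul_self_inj (norm_nonneg _) (norm_nonneg _)).1 h

theorem l2_opNorm_mul_conjTranspose_isometry [DecidableEq m] [DecidableEq l]
    {V : Matrix m n 𝕜} (hV : Vᴴ * V = 1) (M : Matrix l n 𝕜) : ‖M * Vᴴ‖ = ‖M‖ := by
  rw [← l2_opNorm_conjTranspose, conjTranspose_mul, conjTranspose_conjTranspose,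
    l2_opNorm_isometry_mul hV, l2_opNorm_conjTranspose]

theorem isStarProjection_mul_conjTranspose {U : Matrix m n 𝕜} (hU : Uᴴ * U = 1) :
    IsStarProjection (U * Uᴴ) where
  isIdempotentElem := by
    rw [IsIdempotentElem, Matrix.mul_assoc, ← Matrix.mul_assoc Uᴴ, hU, Matrix.one_mul]
  isSelfAdjoint := isHermitian_mul_conjTranspose_self U

theorem l2_opNorm_mul_conjTranspose_mul_mul_conjTranspose [DecidableEq l] [DecidableEq m]
    {U : Matrix m n 𝕜} {V : Matrix m l 𝕜} (hU : Uᴴ * U = 1) (hV : Vᴴ * V = 1) :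
    ‖U * Uᴴ * (V * Vᴴ)‖ = ‖Uᴴ * V‖ := by
  rw [← l2_opNorm_isometry_mul hU, ← l2_opNorm_mul_conjTranspose_isometry hV]
  simp only [Matrix.mul_assoc]

end Matrix

open scoped Matrix.Norms.L2Operator

theorem proj_diff_spectral {n k : ℕ}
    (X₀ Y₀ : Matrix (Fin n) (Fin k) ℝ) (X₁ Y₁ : Matrix (Fin n) (Fin (n - k)) ℝ)
    (hX : (Matrix.fromCols X₀ X₁)ᵀ * Matrix.fromCols X₀ X₁ = 1)
    (hX' : Matrix.fromCols X₀ X₁ * (Matrix.fromCols X₀ X₁)ᵀ = 1)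
    (hY : (Matrix.fromCols Y₀ Y₁)ᵀ * Matrix.fromCols Y₀ Y₁ = 1)
    (hY' : Matrix.fromCols Y₀ Y₁ * (Matrix.fromCols Y₀ Y₁)ᵀ = 1) :
    specNorm (X₀ * X₀ᵀ - Y₀ * Y₀ᵀ) = specNorm (X₀ᵀ * Y₁) := by
  simp only [← conjTranspose_eq_transpose_of_trivial] at hX hX' hY hY' ⊢
  change ‖X₀ * X₀ᴴ - Y₀ * Y₀ᴴ‖ = ‖X₀ᴴ * Y₁‖
  obtain ⟨hX₀, hX₁⟩ := conjTranspose_mul_self_eq_one_of_fromCols hX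
  obtain ⟨hY₀, hY₁⟩ := conjTranspose_mul_self_eq_one_of_fromCols hY
  rw [conjTranspose_fromCols_eq_fromRows_conjTranspose, fromCols_mul_fromRows] at hX' hY'
  have hCB : ‖X₁ᴴ * Y₀‖ ≤ ‖X₀ᴴ * Y₁‖ := by
    refine l2_opNorm_le_of_isometric_completions (X₀ᴴ * Y₀) ?_ ?_
    · calc _ = X₀ᴴ * (Y₀ * Y₀ᴴ + Y₁ * Y₁ᴴ) * X₀ := by
            simp only [conjTranspose_mul, conjTranspose_conjTranspose, Matrix.mul_add,
              Matrix.add_mul, Matrix.mul_assoc]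
        _ = 1 := by rw [hY', Matrix.mul_one, hX₀]
    · calc _ = Y₀ᴴ * (X₀ * X₀ᴴ + X₁ * X₁ᴴ) * Y₀ := by
            simp only [conjTranspose_mul, conjTranspose_conjTranspose, Matrix.mul_add,
              Matrix.add_mul, Matrix.mul_assoc]
        _ = 1 := by rw [hX', Matrix.mul_one, hY₀]
  rw [l2_opNorm_sub_eq_max_of_isStarProjection (isStarProjection_mul_conjTranspose hX₀)
      (isStarProjection_mul_conjTranspose hY₀), ← eq_sub_of_add_eq' hX', ← eq_sub_of_add_eq' hY',
    l2_opNorm_mul_conjTranspose_mul_mul_conjTranspose hX₀ hY₁,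
    l2_opNorm_mul_conjTranspose_mul_mul_conjTranspose hX₁ hY₀, max_eq_left hCB]
end

section
/- Let E ∈ ℝ^{n×d} and Ê ∈ ℝ^{n×k} with k ≤ d, both having orthonormal columns. Then ‖EEᵀ − ÊÊᵀ‖_F = √(d − k + 2‖ÊᵀE^⊥‖_F²), where E^⊥ ∈ ℝ^{n×(n−d)} is a matrix whose columns form an orthonormal basis for the orthogonal complement of the column space of E. -/
/-!
Write `P = E Eᵀ` and `Q = Ê Êᵀ`; orthonormality of the columns makes them symmetric
idempotents with `tr P = d` and `tr Q = k`, so `‖P - Q‖_F² = d + k - 2 tr (P Q)`.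
The cross term is `tr (P Q) = ‖Êᵀ E‖_F²`, and since `E Eᵀ + E^⊥ E^⊥ᵀ = 1`,
`‖Êᵀ E‖_F² + ‖Êᵀ E^⊥‖_F² = tr (Êᵀ Ê) = k`.
-/

open Matrix

/-- Frobenius norm of a real matrix. -/
noncomputable def frob {m n : ℕ} (A : Matrix (Fin m) (Fin n) ℝ) : ℝ :=
  Real.sqrt (∑ i, ∑ j, (A i j) ^ 2)

namespace Matrix

variable {m p q r R : Type*} [Fintype m] [Fintype p] [Fintype q] [Fintype r] [CommRing R]

lemma trace_mul_transpose_eq_sum_sq (A : Matrix m p R) :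
    trace (A * Aᵀ) = ∑ i, ∑ j, A i j ^ 2 := by
  simp [trace, mul_apply, sq]

lemma trace_mul_transpose_of_transpose_mul_eq_one [DecidableEq p] {A : Matrix m p R}
    (hA : Aᵀ * A = 1) : trace (A * Aᵀ) = Fintype.card p := by
  rw [trace_mul_comm, hA, trace_one]

lemma mul_transpose_mul_self_of_transpose_mul_eq_one [DecidableEq p] {A : Matrix m p R}
    (hA : Aᵀ * A = 1) : A * Aᵀ * (A * Aᵀ) = A * Aᵀ := by
  rw [Matrix.mul_assoc, ← Matrix.mul_assoc Aᵀ, hA, Matrix.one_mul]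

lemma trace_sub_mul_transpose_sub_of_orthonormal [DecidableEq p] [DecidableEq q]
    {A : Matrix m p R} {B : Matrix m q R} (hA : Aᵀ * A = 1) (hB : Bᵀ * B = 1) :
    trace ((A * Aᵀ - B * Bᵀ) * (A * Aᵀ - B * Bᵀ)ᵀ)
      = Fintype.card p + Fintype.card q - 2 * trace ((Bᵀ * A) * (Bᵀ * A)ᵀ) := by
  have hexpand : (A * Aᵀ - B * Bᵀ) * (A * Aᵀ - B * Bᵀ)ᵀ
      = A * Aᵀ * (A * Aᵀ) - A * Aᵀ * (B * Bᵀ) - B * Bᵀ * (A * Aᵀ) + B * Bᵀ * (B * Bᵀ) := by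
    simp only [transpose_sub, transpose_mul, transpose_transpose]
    noncomm_ring
  have hcross : trace (A * Aᵀ * (B * Bᵀ)) = trace ((Bᵀ * A) * (Bᵀ * A)ᵀ) := by
    rw [← Matrix.mul_assoc, trace_mul_comm, transpose_mul, transpose_transpose]
    simp only [Matrix.mul_assoc]
  rw [hexpand, trace_add, trace_sub, trace_sub, trace_mul_comm (B * Bᵀ),
    mul_transpose_mul_self_of_transpose_mul_eq_one hA,
    mul_transpose_mul_self_of_transpose_mul_eq_one hB,
    trace_mul_transpose_of_transpose_mul_eq_one hA,
    trace_mul_transpose_of_transpose_mul_eq_one hB, hcross]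
  ring

lemma trace_mul_transpose_add_of_mul_transpose_add_eq_one [DecidableEq m] [DecidableEq q]
    {A : Matrix m p R} {C : Matrix m r R} {B : Matrix m q R}
    (hAC : A * Aᵀ + C * Cᵀ = 1) (hB : Bᵀ * B = 1) :
    trace ((Bᵀ * A) * (Bᵀ * A)ᵀ) + trace ((Bᵀ * C) * (Bᵀ * C)ᵀ) = Fintype.card q := by
  have hsplit : (Bᵀ * A) * (Bᵀ * A)ᵀ + (Bᵀ * C) * (Bᵀ * C)ᵀ = Bᵀ * (A * Aᵀ + C * Cᵀ) * B := by
    simp only [transpose_mul, transpose_transpose, Matrix.mul_add, Matrix.add_mul,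
      Matrix.mul_assoc]
  rw [← trace_add, hsplit, hAC, Matrix.mul_one, hB, trace_one]

end Matrix

lemma frob_eq_sqrt_trace {a b : ℕ} (A : Matrix (Fin a) (Fin b) ℝ) :
    frob A = Real.sqrt (trace (A * Aᵀ)) := by
  rw [frob, trace_mul_transpose_eq_sum_sq]

lemma frob_sq_eq_trace {a b : ℕ} (A : Matrix (Fin a) (Fin b) ℝ) :
    frob A ^ 2 = trace (A * Aᵀ) := by
  rw [frob_eq_sqrt_trace, Real.sq_sqrt (by rw [trace_mul_transpose_eq_sum_sq]; positivity)]

theorem pip_loss_orthonormal_case_general {n d k : ℕ}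
    (E : Matrix (Fin n) (Fin d) ℝ) (Ehat : Matrix (Fin n) (Fin k) ℝ)
    (Eperp : Matrix (Fin n) (Fin (n - d)) ℝ)
    (hE : Eᵀ * E = 1) (hEhat : Ehatᵀ * Ehat = 1)
    (hfull' : Matrix.fromCols E Eperp * (Matrix.fromCols E Eperp)ᵀ = 1) :
    frob (E * Eᵀ - Ehat * Ehatᵀ)
      = Real.sqrt ((d : ℝ) - (k : ℝ) + 2 * (frob (Ehatᵀ * Eperp)) ^ 2) := by
  have hsplit : E * Eᵀ + Eperp * Eperpᵀ = 1 := by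
    rwa [transpose_fromCols, fromCols_mul_fromRows] at hfull'
  have hcross := trace_mul_transpose_add_of_mul_transpose_add_eq_one hsplit hEhat
  rw [frob_eq_sqrt_trace, trace_sub_mul_transpose_sub_of_orthonormal hE hEhat, frob_sq_eq_trace]
  simp only [Fintype.card_fin] at hcross ⊢
  congr 1
  linarith

theorem pip_loss_orthonormal_case {n d k : ℕ} (hk : k ≤ d)
    (E : Matrix (Fin n) (Fin d) ℝ) (Ehat : Matrix (Fin n) (Fin k) ℝ)
    (Eperp : Matrix (Fin n) (Fin (n - d)) ℝ)
    (hE : Eᵀ * E = 1) (hEhat : Ehatᵀ * Ehat = 1)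
    (hfull : (Matrix.fromCols E Eperp)ᵀ * Matrix.fromCols E Eperp = 1)
    (hfull' : Matrix.fromCols E Eperp * (Matrix.fromCols E Eperp)ᵀ = 1) :
    frob (E * Eᵀ - Ehat * Ehatᵀ)
      = Real.sqrt ((d : ℝ) - (k : ℝ) + 2 * (frob (Ehatᵀ * Eperp)) ^ 2) :=
  pip_loss_orthonormal_case_general E Ehat Eperp hE hEhat hfull'
end

section
/- Mirsky–Wielandt–Hoffman inequality (Frobenius case): Let A and Ã = A + Z be real symmetric n×n matrices with decreasingly ordered eigenvalues λ_i and λ̃_i. Then Σ_{i=1}^{n} (λ_i − λ̃_i)² ≤ ‖Z‖_F². -/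
/-!
Write `A = U Λ Uᵀ` and `A + Z = V Λ̃ Vᵀ`. Since
`‖Z‖_F² = tr A² + tr (A + Z)² - 2 tr (A (A + Z))` and `tr A² = ∑ λᵢ²`,
it suffices to show `tr (A (A + Z)) ≤ ∑ λᵢ λ̃ᵢ`. Now `tr (A (A + Z)) = ∑ᵢⱼ λᵢ λ̃ⱼ Wᵢⱼ²`
with `W = Uᵀ V` orthogonal, so `(Wᵢⱼ²)` is doubly stochastic. By Birkhoff's theorem it is a
convex combination of permutation matrices, and for each permutation `σ` the rearrangement
inequality gives `∑ λᵢ λ̃_{σ i} ≤ ∑ λᵢ λ̃ᵢ` for similarly ordered eigenvalues.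
-/

open Matrix Finset

lemma Monovary.dotProduct_comp_perm_le {ι α : Type*} [Fintype ι] [CommRing α] [LinearOrder α]
    [IsStrictOrderedRing α] {f g x y : ι → α} (hfg : Monovary f g) {e e' : Equiv.Perm ι}
    (hx : f = x ∘ e) (hy : g = y ∘ e') (σ : Equiv.Perm ι) : x ⬝ᵥ (y ∘ σ) ≤ f ⬝ᵥ g := by
  rw [← comp_equiv_dotProduct_comp_equiv x _ e, ← hx]
  convert hfg.sum_mul_comp_perm_le_sum_mul (σ := (e.trans σ).trans e'.symm) using 1 <;>
    simp [dotProduct, hy]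

namespace Matrix

lemma sum_sq_apply_eq_trace_mul_transpose {m n R : Type*} [Fintype m] [Fintype n]
    [CommSemiring R] (M : Matrix m n R) : ∑ i, ∑ j, M i j ^ 2 = (M * Mᵀ).trace := by
  simp [trace, mul_apply, sq]

variable {ι : Type*} [Fintype ι]

lemma IsSymm.sum_sq_sub_apply {R : Type*} [CommRing R] {A B : Matrix ι ι R} (hA : A.IsSymm)
    (hB : B.IsSymm) :
    ∑ i, ∑ j, (B - A) i j ^ 2 = (A * A).trace + (B * B).trace - 2 * (A * B).trace := by
  rw [sum_sq_apply_eq_trace_mul_transpose, transpose_sub, hA.eq, hB.eq, sub_mul, mul_sub, mul_sub,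
    trace_sub, trace_sub, trace_sub, trace_mul_comm B A]
  ring

variable [DecidableEq ι]

lemma dotProduct_mulVec_le_of_mem_doublyStochastic {S : Matrix ι ι ℝ}
    (hS : S ∈ doublyStochastic ℝ ι) {x y : ι → ℝ} {c : ℝ}
    (h : ∀ σ : Equiv.Perm ι, x ⬝ᵥ (y ∘ σ) ≤ c) : x ⬝ᵥ (S *ᵥ y) ≤ c := by
  obtain ⟨w, hw₀, hw₁, rfl⟩ := exists_eq_sum_perm_of_mem_doublyStochastic hS
  calc x ⬝ᵥ ((∑ σ, w σ • σ.permMatrix ℝ) *ᵥ y) = ∑ σ, w σ * x ⬝ᵥ (y ∘ σ) := by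
        simp only [sum_mulVec, smul_mulVec, permMatrix_mulVec, dotProduct_sum, dotProduct_smul,
          smul_eq_mul]
    _ ≤ ∑ σ, w σ * c := by gcongr with σ; exacts [hw₀ σ, h σ]
    _ = c := by rw [← sum_mul, hw₁, one_mul]

lemma of_sq_mem_doublyStochastic_of_mem_unitaryGroup {W : Matrix ι ι ℝ}
    (hW : W ∈ unitaryGroup ι ℝ) : of (fun i j => W i j ^ 2) ∈ doublyStochastic ℝ ι := by
  refine mem_doublyStochastic_iff_sum.mpr ⟨fun i j => sq_nonneg _, fun i => ?_, fun j => ?_⟩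
  · simpa [mul_apply, sq] using congr_fun₂ (mem_unitaryGroup_iff.mp hW) i i
  · simpa [mul_apply, sq] using congr_fun₂ (mem_unitaryGroup_iff'.mp hW) j j

lemma trace_diagonal_mul_mul_diagonal_mul_transpose {R : Type*} [CommSemiring R]
    (d e : ι → R) (W : Matrix ι ι R) :
    (diagonal d * W * diagonal e * Wᵀ).trace = d ⬝ᵥ (of (fun i j => W i j ^ 2) *ᵥ e) := by
  simp only [trace, Matrix.diag, mul_apply (M := _ * diagonal e), mul_diagonal, diagonal_mul,
    dotProduct, mulVec, of_apply, transpose_apply, mul_sum]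
  exact sum_congr rfl fun i _ => sum_congr rfl fun j _ => by ring

namespace IsHermitian

variable {A B : Matrix ι ι ℝ}

noncomputable def eigenbasisOverlap (hA : A.IsHermitian) (hB : B.IsHermitian) : Matrix ι ι ℝ :=
  of fun i j =>
    (star (hA.eigenvectorUnitary : Matrix ι ι ℝ) * (hB.eigenvectorUnitary : Matrix ι ι ℝ)) i j ^ 2

lemma eigenbasisOverlap_mem_doublyStochastic (hA : A.IsHermitian) (hB : B.IsHermitian) :
    hA.eigenbasisOverlap hB ∈ doublyStochastic ℝ ι :=
  of_sq_mem_doublyStochastic_of_mem_unitaryGroup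
    (star hA.eigenvectorUnitary * hB.eigenvectorUnitary).2

lemma eigenbasisOverlap_self (hA : A.IsHermitian) : hA.eigenbasisOverlap hA = 1 := by
  ext i j
  simp [eigenbasisOverlap, one_apply]

lemma trace_mul_eq (hA : A.IsHermitian) (hB : B.IsHermitian) :
    (A * B).trace = hA.eigenvalues ⬝ᵥ (hA.eigenbasisOverlap hB *ᵥ hB.eigenvalues) := by
  set U : Matrix ι ι ℝ := (hA.eigenvectorUnitary : Matrix ι ι ℝ)
  set V : Matrix ι ι ℝ := (hB.eigenvectorUnitary : Matrix ι ι ℝ)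
  have hA' : A = U * diagonal hA.eigenvalues * star U := by
    simpa [RCLike.ofReal_real_eq_id] using hA.spectral_theorem
  have hB' : B = V * diagonal hB.eigenvalues * star V := by
    simpa [RCLike.ofReal_real_eq_id] using hB.spectral_theorem
  have hW : (star U * V)ᵀ = star V * U := by
    simp [transpose_mul, star_eq_conjTranspose, conjTranspose_eq_transpose_of_trivial]
  rw [eigenbasisOverlap, ← trace_diagonal_mul_mul_diagonal_mul_transpose, hW]
  conv_lhs => rw [hA', hB']
  simp only [Matrix.mul_assoc]
  rw [trace_mul_comm U]
  simp only [Matrix.mul_assoc]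
  rfl

lemma trace_mul_self_eq_dotProduct (hA : A.IsHermitian) {μ : ι → ℝ}
    (hμ : ∃ e : Equiv.Perm ι, μ = hA.eigenvalues ∘ e) : (A * A).trace = μ ⬝ᵥ μ := by
  obtain ⟨e, rfl⟩ := hμ
  rw [comp_equiv_dotProduct_comp_equiv, trace_mul_eq hA hA, eigenbasisOverlap_self, one_mulVec]

lemma trace_mul_le_dotProduct (hA : A.IsHermitian) (hB : B.IsHermitian) {μ ν : ι → ℝ}
    (hμ : ∃ e : Equiv.Perm ι, μ = hA.eigenvalues ∘ e)
    (hν : ∃ e : Equiv.Perm ι, ν = hB.eigenvalues ∘ e) (hμν : Monovary μ ν) :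
    (A * B).trace ≤ μ ⬝ᵥ ν := by
  obtain ⟨e, he⟩ := hμ
  obtain ⟨e', he'⟩ := hν
  rw [trace_mul_eq hA hB]
  exact dotProduct_mulVec_le_of_mem_doublyStochastic
    (eigenbasisOverlap_mem_doublyStochastic hA hB) (hμν.dotProduct_comp_perm_le he he')

end IsHermitian

end Matrix

theorem mirsky_wielandt_hoffman {n : ℕ} (A Z : Matrix (Fin n) (Fin n) ℝ)
    (hA : A.IsHermitian) (hAZ : (A + Z).IsHermitian)
    (μ μt : Fin n → ℝ)
    (hμ : ∃ e : Equiv.Perm (Fin n), μ = hA.eigenvalues ∘ e)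
    (hμt : ∃ e : Equiv.Perm (Fin n), μt = hAZ.eigenvalues ∘ e)
    (hμm : Antitone μ) (hμtm : Antitone μt) :
    ∑ i, (μ i - μt i) ^ 2 ≤ ∑ i, ∑ j, (Z i j) ^ 2 := by
  have hcross := hA.trace_mul_le_dotProduct hAZ hμ hμt (hμm.monovary hμtm)
  have hexpand : ∑ i, (μ i - μt i) ^ 2 = μ ⬝ᵥ μ + μt ⬝ᵥ μt - 2 * μ ⬝ᵥ μt := by
    simp only [dotProduct, mul_sum, ← sum_add_distrib, ← sum_sub_distrib]
    exact sum_congr rfl fun i _ => by ring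
  have hfrob := (isHermitian_iff_isSymm.mp hA).sum_sq_sub_apply (isHermitian_iff_isSymm.mp hAZ)
  rw [add_sub_cancel_left, hA.trace_mul_self_eq_dotProduct hμ,
    hAZ.trace_mul_self_eq_dotProduct hμt] at hfrob
  rw [hexpand, hfrob]
  linarith
end
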